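/- If a blocked chain of domino tiles has total pip sum equal to 42, then both of its ends equal 0, it consists of exactly 10 tiles, it contains all seven domino tiles containing 0, and its three remaining tiles contain no 0 and their six entries are pairwise distinct (hence they are exactly the values 1,2,3,4,5,6). -/

import Mathlib

/-- A domino tile is an unordered pair of values in `{0,…,6}`. -/
abbrev Tile := Sym2 (Fin 7)

/-- The pip sum of the tile `[a,b]` is `a + b`. -/
def pips (t : Tile) : ℕ :=
  Sym2.lift ⟨fun (a b : Fin 7) => (a : ℕ) + (b : ℕ), fun a b => Nat.add_comm a b⟩ t

/-- A chain of domino tiles: a nonempty finite sequence of oriented tiles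
`(a₁,b₁),…,(aₙ,bₙ)` whose underlying unordered tiles are pairwise distinct and
which satisfies `bᵢ = aᵢ₊₁` for all `1 ≤ i < n`. -/
structure DChain where
  tiles : List (Fin 7 × Fin 7)
  ne : tiles ≠ []
  nodup : (tiles.map fun p => Sym2.mk p.1 p.2).Nodup
  linked : tiles.Chain' fun p q => p.2 = q.1

/-- The left end `a₁` of a chain. -/
def DChain.left (C : DChain) : Fin 7 := (C.tiles.head C.ne).1

/-- The right end `bₙ` of a chain. -/
def DChain.right (C : DChain) : Fin 7 := (C.tiles.getLast C.ne).2

/-- The `2n` entries `a₁,b₁,a₂,b₂,…,aₙ,bₙ` of a chain. -/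
def DChain.entries (C : DChain) : List (Fin 7) := C.tiles.flatMap fun p => [p.1, p.2]

/-- The underlying (unordered) tiles of a chain. -/
def DChain.tileList (C : DChain) : List Tile := C.tiles.map fun p => Sym2.mk p.1 p.2

/-- The total pip sum of a chain. -/
def DChain.pipsSum (C : DChain) : ℕ := (C.tiles.map fun p => (p.1 : ℕ) + (p.2 : ℕ)).sum

/-- A chain is blocked if no domino tile outside the chain contains its left end,
and no domino tile outside the chain contains its right end. -/
def DChain.Blocked (C : DChain) : Prop :=
  ∀ t : Tile, t ∉ C.tileList → C.left ∉ t ∧ C.right ∉ t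

/-!
Let `x` be the left end. Blockedness puts all seven tiles containing `x` into the chain, so `x`
occurs `8` times among the entries. Inner entries of a chain come in equal adjacent pairs, so a
value occurs an odd number of times iff it sits at exactly one end; hence the right end is `x`
too. Every `k ≠ x` occurs once in the tiles containing `x`, so an odd number of times, in
particular at least once, in the tiles avoiding `x`. The former carry `21 + 7x` pips and the latter
at least `1 + ⋯ + 6 - x = 21 - x`, so `42 ≥ 42 + 6x`. Thus `x = 0`, and equality forces each
`k ≠ 0` to occur exactly once in the tiles avoiding `0`.
-/

open Finset

def Tile.mult (k : Fin 7) : Tile → ℕ :=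
  Sym2.lift ⟨fun a b => [a, b].count k, fun a b => (List.Perm.swap b a []).count_eq k⟩

namespace Tile

theorem pips_eq_sum_mult : ∀ t : Tile, pips t = ∑ k : Fin 7, k.val * mult k t := by decide

theorem mult_eq_zero_of_notMem : ∀ (k : Fin 7) (t : Tile), k ∉ t → mult k t = 0 := by decide

theorem sum_mult_filter_mem_self : ∀ x : Fin 7, ∑ t ∈ univ.filter (x ∈ ·), mult x t = 8 := by
  decide

theorem sum_mult_filter_mem_of_ne :
    ∀ x k : Fin 7, k ≠ x → ∑ t ∈ univ.filter (x ∈ ·), mult k t = 1 := by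
  decide

theorem sum_pips_filter_mem : ∀ x : Fin 7, ∑ t ∈ univ.filter (x ∈ ·), pips t = 21 + 7 * x.val := by
  decide

theorem sum_pips_eq_sum_mult (s : Finset Tile) :
    ∑ t ∈ s, pips t = ∑ k : Fin 7, k.val * ∑ t ∈ s, mult k t := by
  simp only [pips_eq_sum_mult, Finset.mul_sum]
  exact Finset.sum_comm

end Tile

theorem List.length_flatMap_pair {α : Type*} (l : List (α × α)) :
    (l.flatMap fun p => [p.1, p.2]).length = 2 * l.length := by
  simp [List.length_flatMap, mul_comm]

theorem List.count_flatMap_pair_modEq {α : Type*} [DecidableEq α] :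
    ∀ {l : List (α × α)} (hne : l ≠ []), l.IsChain (fun p q => p.2 = q.1) → ∀ k : α,
      (l.flatMap fun p => [p.1, p.2]).count k ≡ [(l.head hne).1, (l.getLast hne).2].count k [MOD 2]
  | [_], _, _, _ => Nat.ModEq.refl _
  | p :: q :: l, _, hl, k => by
    obtain ⟨hpq, hl⟩ := List.isChain_cons_cons.mp hl
    have ih := List.count_flatMap_pair_modEq (List.cons_ne_nil q l) hl k
    simp only [List.flatMap_cons, List.count_append, List.head_cons, List.getLast_cons_cons,
      List.count_cons, List.count_nil, hpq, Nat.ModEq] at ih ⊢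
    omega

theorem Finset.eq_one_of_sum_mul_eq_sum {ι : Type*} {s : Finset ι} {w m : ι → ℕ}
    (hpos : ∀ i ∈ s, w i ≠ 0 → 1 ≤ m i) (hsum : ∑ i ∈ s, w i * m i = ∑ i ∈ s, w i) {i : ι}
    (hs : i ∈ s) (hi : w i ≠ 0) :
    m i = 1 := by
  have hle : ∀ j ∈ s, w j ≤ w j * m j := fun j hj => by
    rcases eq_or_ne (w j) 0 with h0 | h0
    · simp [h0]
    · exact Nat.le_mul_of_pos_right _ (hpos j hj h0)
  have heq := (Finset.sum_eq_sum_iff_of_le hle).mp hsum.symm i hs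
  exact (Nat.mul_eq_left hi).mp heq.symm

namespace DChain

variable (C : DChain)

theorem count_entries_modEq (k : Fin 7) : C.entries.count k ≡ [C.left, C.right].count k [MOD 2] :=
  List.count_flatMap_pair_modEq C.ne C.linked k

theorem nodup_tileList : C.tileList.Nodup := C.nodup

theorem sum_toFinset_tileList (f : Tile → ℕ) :
    ∑ t ∈ C.tileList.toFinset, f t = (C.tiles.map fun p => f s(p.1, p.2)).sum := by
  rw [List.sum_toFinset f C.nodup_tileList, tileList, List.map_map]
  rfl

theorem count_entries (k : Fin 7) :
    C.entries.count k = ∑ t ∈ C.tileList.toFinset, Tile.mult k t := by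
  rw [entries, List.count_flatMap, sum_toFinset_tileList]
  rfl

theorem pipsSum_eq_sum_pips : C.pipsSum = ∑ t ∈ C.tileList.toFinset, pips t := by
  rw [pipsSum, sum_toFinset_tileList]
  rfl

def tilesAvoiding (x : Fin 7) : Finset Tile := C.tileList.toFinset.filter (x ∉ ·)

theorem count_flatMap_filter_avoiding (x k : Fin 7) :
    ((C.tiles.filter fun p => p.1 != x && p.2 != x).flatMap fun p => [p.1, p.2]).count k =
      ∑ t ∈ C.tilesAvoiding x, Tile.mult k t := by
  have hfilter : C.tilesAvoiding x =
      ((C.tiles.filter fun p => p.1 != x && p.2 != x).map fun p => s(p.1, p.2)).toFinset := by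
    ext t
    simp only [tilesAvoiding, tileList, Finset.mem_filter, List.mem_toFinset, List.mem_map,
      List.mem_filter, Bool.and_eq_true, bne_iff_ne, Prod.exists]
    constructor
    · rintro ⟨⟨a, b, hab, rfl⟩, hx⟩
      simp only [Sym2.mem_iff, not_or] at hx
      exact ⟨a, b, ⟨hab, Ne.symm hx.1, Ne.symm hx.2⟩, rfl⟩
    · rintro ⟨a, b, ⟨hab, ha, hb⟩, rfl⟩
      simp only [Sym2.mem_iff, not_or]
      exact ⟨⟨a, b, hab, rfl⟩, Ne.symm ha, Ne.symm hb⟩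
  have hnodup : ((C.tiles.filter fun p => p.1 != x && p.2 != x).map fun p => s(p.1, p.2)).Nodup :=
    C.nodup.sublist (List.filter_sublist.map _)
  rw [hfilter, List.count_flatMap, List.sum_toFinset _ hnodup, List.map_map]
  rfl

end DChain

namespace DChain.Blocked

variable {C : DChain}

theorem mem_tileList_of_left_mem (h : C.Blocked) {t : Tile} (ht : C.left ∈ t) : t ∈ C.tileList :=
  not_not.mp fun hnot => (h t hnot).1 ht

theorem sum_toFinset_tileList_eq (h : C.Blocked) (f : Tile → ℕ) :
    ∑ t ∈ C.tileList.toFinset, f t =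
      ∑ t ∈ univ.filter (C.left ∈ ·), f t + ∑ t ∈ C.tilesAvoiding C.left, f t := by
  have hleft : C.tileList.toFinset.filter (C.left ∈ ·) = univ.filter (C.left ∈ ·) := by
    ext t
    simpa using h.mem_tileList_of_left_mem
  rw [← Finset.sum_filter_add_sum_filter_not _ (C.left ∈ ·), hleft, tilesAvoiding]

theorem count_entries_eq (h : C.Blocked) (k : Fin 7) :
    C.entries.count k =
      ∑ t ∈ univ.filter (C.left ∈ ·), Tile.mult k t +
        ∑ t ∈ C.tilesAvoiding C.left, Tile.mult k t := by
  rw [C.count_entries, h.sum_toFinset_tileList_eq]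

theorem count_entries_left (h : C.Blocked) : C.entries.count C.left = 8 := by
  rw [h.count_entries_eq, Tile.sum_mult_filter_mem_self, Finset.sum_eq_zero, add_zero]
  intro t ht
  exact Tile.mult_eq_zero_of_notMem _ _ (Finset.mem_filter.mp ht).2

theorem right_eq_left (h : C.Blocked) : C.right = C.left := by
  by_contra hne
  have hmod := C.count_entries_modEq C.left
  simp [h.count_entries_left, hne, Nat.ModEq] at hmod

theorem odd_sum_mult_tilesAvoiding (h : C.Blocked) {k : Fin 7} (hk : k ≠ C.left) :
    Odd (∑ t ∈ C.tilesAvoiding C.left, Tile.mult k t) := by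
  have hmod := C.count_entries_modEq k
  rw [h.count_entries_eq, Tile.sum_mult_filter_mem_of_ne _ _ hk, h.right_eq_left] at hmod
  simp only [List.count_cons, List.count_nil, beq_iff_eq, hk.symm, if_false, Nat.ModEq] at hmod
  rw [Nat.odd_iff]
  omega

theorem pipsSum_eq (h : C.Blocked) :
    C.pipsSum = 21 + 7 * C.left.val + ∑ t ∈ C.tilesAvoiding C.left, pips t := by
  rw [C.pipsSum_eq_sum_pips, h.sum_toFinset_tileList_eq, Tile.sum_pips_filter_mem]

theorem add_six_mul_left_le_pipsSum (h : C.Blocked) : 42 + 6 * C.left.val ≤ C.pipsSum := by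
  have hvals : C.left.val + ∑ k ∈ univ.erase C.left, k.val = 21 := by
    rw [Finset.add_sum_erase _ _ (mem_univ _)]
    decide
  calc 42 + 6 * C.left.val = 21 + 7 * C.left.val + ∑ k ∈ univ.erase C.left, k.val := by omega
    _ ≤ 21 + 7 * C.left.val +
        ∑ k ∈ univ.erase C.left, k.val * ∑ t ∈ C.tilesAvoiding C.left, Tile.mult k t := by
      gcongr with k hk
      exact Nat.le_mul_of_pos_right _ (h.odd_sum_mult_tilesAvoiding (Finset.ne_of_mem_erase hk)).pos
    _ ≤ 21 + 7 * C.left.val +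
        ∑ k, k.val * ∑ t ∈ C.tilesAvoiding C.left, Tile.mult k t := by
      gcongr
      exact Finset.erase_subset _ _
    _ = C.pipsSum := by rw [h.pipsSum_eq, Tile.sum_pips_eq_sum_mult]

theorem left_eq_zero (h : C.Blocked) (h42 : C.pipsSum = 42) : C.left = 0 := by
  have := h.add_six_mul_left_le_pipsSum
  exact Fin.ext (by omega)

theorem sum_mult_tilesAvoiding_zero (h : C.Blocked) (h42 : C.pipsSum = 42) (k : Fin 7) :
    ∑ t ∈ C.tilesAvoiding 0, Tile.mult k t = if k = 0 then 0 else 1 := by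
  have hleft := h.left_eq_zero h42
  split_ifs with hk
  · subst hk
    exact Finset.sum_eq_zero fun t ht => Tile.mult_eq_zero_of_notMem _ _ (Finset.mem_filter.mp ht).2
  have hpos : ∀ j ∈ univ, j.val ≠ 0 → 1 ≤ ∑ t ∈ C.tilesAvoiding 0, Tile.mult j t :=
    fun j _ hj => (hleft ▸ h.odd_sum_mult_tilesAvoiding (hleft ▸ Fin.val_ne_zero_iff.mp hj)).pos
  have hsum : ∑ j : Fin 7, j.val * ∑ t ∈ C.tilesAvoiding 0, Tile.mult j t = ∑ j : Fin 7, j.val := by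
    have hpips := h.pipsSum_eq
    rw [hleft, Tile.sum_pips_eq_sum_mult, h42] at hpips
    rw [show ∑ j : Fin 7, j.val = 21 by decide]
    simp only [Fin.val_zero] at hpips
    omega
  exact Finset.eq_one_of_sum_mul_eq_sum hpos hsum (mem_univ k) (Fin.val_ne_zero_iff.mpr hk)

theorem length_tiles (h : C.Blocked) (h42 : C.pipsSum = 42) : C.tiles.length = 10 := by
  have hcount : ∀ k, C.entries.count k = if k = 0 then 8 else 2 := by
    intro k
    have hleft := h.left_eq_zero h42
    split_ifs with hk
    · rw [hk, ← hleft, h.count_entries_left]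
    · rw [h.count_entries_eq, hleft, Tile.sum_mult_filter_mem_of_ne 0 k hk,
        h.sum_mult_tilesAvoiding_zero h42, if_neg hk]
  have hlen : C.entries.length = 2 * C.tiles.length := List.length_flatMap_pair C.tiles
  have hsum := Multiset.sum_count_eq_card (s := univ) (m := (C.entries : Multiset (Fin 7)))
    fun _ _ => mem_univ _
  simp only [Multiset.coe_count, Multiset.coe_card, hcount] at hsum
  rw [show ∑ k : Fin 7, (if k = 0 then 8 else 2) = 20 by decide] at hsum
  omega

end DChain.Blocked

theorem blocked_pipsSum_42_structure (C : DChain) (h : C.Blocked)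
    (h42 : C.pipsSum = 42) :
    C.left = 0 ∧ C.right = 0 ∧ C.tiles.length = 10 ∧
    (∀ t : Tile, (0 : Fin 7) ∈ t → t ∈ C.tileList) ∧
    ((C.tiles.filter fun p => p.1 != 0 && p.2 != 0).length = 3 ∧
      ((C.tiles.filter fun p => p.1 != 0 && p.2 != 0).flatMap fun p => [p.1, p.2]).Nodup ∧
      ((C.tiles.filter fun p => p.1 != 0 && p.2 != 0).flatMap
          fun p => [p.1, p.2]).toFinset = ({1, 2, 3, 4, 5, 6} : Finset (Fin 7))) := by
  have hleft := h.left_eq_zero h42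
  set rest := C.tiles.filter fun p => p.1 != 0 && p.2 != 0
  have hcount : ∀ k, (rest.flatMap fun p => [p.1, p.2]).count k = if k = 0 then 0 else 1 :=
    fun k => (C.count_flatMap_filter_avoiding 0 k).trans (h.sum_mult_tilesAvoiding_zero h42 k)
  have hnodup : (rest.flatMap fun p => [p.1, p.2]).Nodup :=
    List.nodup_iff_count_le_one.mpr fun k => by rw [hcount]; split_ifs <;> omega
  have hvalues : (rest.flatMap fun p => [p.1, p.2]).toFinset = {1, 2, 3, 4, 5, 6} := by
    ext k
    rw [List.mem_toFinset, ← List.count_pos_iff, hcount]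
    revert k
    decide
  have hrest : rest.length = 3 := by
    have hcard := List.toFinset_card_of_nodup hnodup
    rw [hvalues, List.length_flatMap_pair] at hcard
    exact (Nat.mul_left_cancel_iff two_pos).mp hcard.symm
  exact ⟨hleft, h.right_eq_left.trans hleft, h.length_tiles h42,
    fun t ht => h.mem_tileList_of_left_mem (hleft ▸ ht), hrest, hnodup, hvalues⟩
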